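/- Fix matrices Y (p×N), Φ (t×N of full row rank, N ≥ t), a diagonal positive N×N matrix D, a symmetric positive definite p×p matrix V, and a symmetric positive definite t×t matrix K. Define Ω = D + Φᵀ K Φ and the evidential loss L(M) = (p/2) log det Ω + (1/2) trace(Ω⁻¹ (Y − MΦ)ᵀ V⁻¹ (Y − MΦ)) as a function of the p×t matrix M. Then L has the unique global minimizer M̂ = Y D⁻¹ Φᵀ (Φ D⁻¹ Φᵀ)⁻¹, and this minimizer does not depend on K. -/

import Mathlib

/-!
Write `R := Y - M̂Φ` and `P := Ω⁻¹`. The loss is an affine function of the weighted squared norm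
`tr(P Aᵀ V⁻¹ A)` of `A = Y - MΦ`, a positive definite quadratic form. Since `Y - MΦ = R - (M - M̂)Φ`,
Pythagoras gives `L M = L M̂ + ½ tr(P ((M - M̂)Φ)ᵀ V⁻¹ (M - M̂)Φ)` as soon as `R P Φᵀ = 0`, and full
row rank of `Φ` makes the last term vanish only at `M = M̂`. The orthogonality `R P Φᵀ = 0` holds for
the weight `D⁻¹` by the normal equations of weighted least squares, and the Woodbury identity for
`Ω⁻¹ = (D + Φᵀ K Φ)⁻¹` transfers it from `D⁻¹` to `Ω⁻¹`; this is why `M̂` does not depend on `K`.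
-/

open Matrix
open scoped MatrixOrder

namespace Matrix

section WeightedSqNorm

variable {m n k : Type*} [Fintype m] [Fintype n] [Fintype k]

def weightedSqNorm (P : Matrix n n ℝ) (Q : Matrix m m ℝ) (A : Matrix m n ℝ) : ℝ :=
  (P * Aᵀ * Q * A).trace

lemma PosSemidef.exists_eq_transpose_mul_self {P : Matrix n n ℝ} (hP : P.PosSemidef) :
    ∃ S : Matrix n n ℝ, P = Sᵀ * S := by
  classical
  simpa [star_eq_conjTranspose, conjTranspose_eq_transpose_of_trivial] using
    CStarAlgebra.nonneg_iff_eq_star_mul_self.mp hP.nonneg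

lemma weightedSqNorm_transpose_mul_self (S : Matrix n n ℝ) (R : Matrix m m ℝ)
    (A : Matrix m n ℝ) :
    weightedSqNorm (Sᵀ * S) (Rᵀ * R) A = ((R * A * Sᵀ)ᵀ * (R * A * Sᵀ)).trace := by
  simp only [weightedSqNorm, transpose_mul, transpose_transpose, Matrix.mul_assoc]
  rw [trace_mul_comm]
  simp only [Matrix.mul_assoc]

lemma weightedSqNorm_nonneg {P : Matrix n n ℝ} {Q : Matrix m m ℝ} (hP : P.PosSemidef)
    (hQ : Q.PosSemidef) (A : Matrix m n ℝ) : 0 ≤ weightedSqNorm P Q A := by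
  obtain ⟨S, rfl⟩ := hP.exists_eq_transpose_mul_self
  obtain ⟨R, rfl⟩ := hQ.exists_eq_transpose_mul_self
  rw [weightedSqNorm_transpose_mul_self]
  simpa [conjTranspose_eq_transpose_of_trivial] using
    (posSemidef_conjTranspose_mul_self (R * A * Sᵀ)).trace_nonneg

lemma weightedSqNorm_eq_zero_iff [DecidableEq m] [DecidableEq n] {P : Matrix n n ℝ}
    {Q : Matrix m m ℝ} (hP : P.PosDef) (hQ : Q.PosDef) {A : Matrix m n ℝ} :
    weightedSqNorm P Q A = 0 ↔ A = 0 := by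
  refine ⟨fun hA => ?_, fun hA => by simp [weightedSqNorm, hA]⟩
  obtain ⟨S, hS⟩ := hP.posSemidef.exists_eq_transpose_mul_self
  obtain ⟨R, hR⟩ := hQ.posSemidef.exists_eq_transpose_mul_self
  rw [hS, hR, weightedSqNorm_transpose_mul_self, ← conjTranspose_eq_transpose_of_trivial,
    trace_conjTranspose_mul_self_eq_zero_iff] at hA
  calc A = Q⁻¹ * (Q * A * P) * P⁻¹ := by
        rw [Matrix.mul_assoc Q, nonsing_inv_mul_cancel_left _ _ (hQ.isUnit.map detMonoidHom),
          mul_nonsing_inv_cancel_right _ _ (hP.isUnit.map detMonoidHom)]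
    _ = Q⁻¹ * (Rᵀ * (R * A * Sᵀ) * S) * P⁻¹ := by rw [hS, hR]; simp only [Matrix.mul_assoc]
    _ = 0 := by rw [hA]; simp

lemma weightedSqNorm_sub_mul {P : Matrix n n ℝ} (hP : P.IsSymm) (Q : Matrix m m ℝ)
    {R : Matrix m n ℝ} {Φ : Matrix k n ℝ} (hR : R * P * Φᵀ = 0) (Δ : Matrix m k ℝ) :
    weightedSqNorm P Q (R - Δ * Φ) = weightedSqNorm P Q R + weightedSqNorm P Q (Δ * Φ) := by
  have hcross₁ : (P * Rᵀ * Q * (Δ * Φ)).trace = 0 := by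
    have hΦPR : Φ * P * Rᵀ = 0 := by
      rw [← hP.eq, ← transpose_transpose Φ, ← transpose_mul, ← transpose_mul, ← Matrix.mul_assoc,
        hR, transpose_zero]
    rw [← Matrix.mul_assoc, trace_mul_comm]
    simp only [← Matrix.mul_assoc, hΦPR, Matrix.zero_mul, trace_zero]
  have hcross₂ : (P * (Δ * Φ)ᵀ * Q * R).trace = 0 := by
    rw [trace_mul_comm, transpose_mul]
    simp only [← Matrix.mul_assoc, hR, Matrix.zero_mul, trace_zero]
  simp only [weightedSqNorm, transpose_sub, Matrix.mul_sub, Matrix.sub_mul, trace_sub,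
    hcross₁, hcross₂]
  ring

end WeightedSqNorm

section LeastSquares

variable {α : Type*} [CommRing α] {m n k : Type*} [Fintype n] [Fintype k] [DecidableEq k]

lemma sub_mul_inv_mul_mul_transpose_eq_zero (Y : Matrix m n α) (Φ : Matrix k n α)
    {W : Matrix n n α} (hG : IsUnit (Φ * W * Φᵀ)) :
    (Y - Y * W * Φᵀ * (Φ * W * Φᵀ)⁻¹ * Φ) * W * Φᵀ = 0 := by
  calc (Y - Y * W * Φᵀ * (Φ * W * Φᵀ)⁻¹ * Φ) * W * Φᵀ
      = Y * W * Φᵀ - Y * W * Φᵀ * (Φ * W * Φᵀ)⁻¹ * (Φ * W * Φᵀ) := by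
        simp only [Matrix.sub_mul, Matrix.mul_assoc]
    _ = 0 := by rw [nonsing_inv_mul_cancel_right _ _ (hG.map detMonoidHom), sub_self]

lemma mul_inv_add_mul_mul_mul_eq_zero [DecidableEq n] {A : Matrix n n α} {U : Matrix n k α}
    {C : Matrix k k α} {V : Matrix k n α} (hA : IsUnit A) (hC : IsUnit C)
    (hAC : IsUnit (C⁻¹ + V * A⁻¹ * U)) {R : Matrix m n α} (hR : R * A⁻¹ * U = 0) :
    R * (A + U * C * V)⁻¹ * U = 0 := by
  rw [add_mul_mul_inv_eq_sub _ _ _ _ hA hC hAC]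
  simp only [Matrix.mul_sub, ← Matrix.mul_assoc, hR, Matrix.zero_mul, sub_zero]

end LeastSquares

section FullRowRank

variable {𝕜 : Type*} [Field 𝕜] {l m n : Type*} [Fintype m] [Fintype n]

lemma vecMul_injective_of_rank_eq_card {Φ : Matrix m n 𝕜} (hΦ : Φ.rank = Fintype.card m) :
    Function.Injective Φ.vecMul := by
  rw [vecMul_injective_iff, linearIndependent_iff_card_eq_finrank_span, ← hΦ,
    rank_eq_finrank_span_row, Set.finrank]

lemma eq_zero_of_mul_eq_zero_of_rank_eq_card {Δ : Matrix l m 𝕜} {Φ : Matrix m n 𝕜}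
    (hΦ : Φ.rank = Fintype.card m) (h : Δ * Φ = 0) : Δ = 0 := by
  funext i
  exact vecMul_injective_of_rank_eq_card hΦ ((congrFun h i).trans (zero_vecMul Φ).symm)

end FullRowRank

end Matrix

theorem evidential_loss_unique_min_general {p t N : ℕ}
    (Y : Matrix (Fin p) (Fin N) ℝ)
    (Φ : Matrix (Fin t) (Fin N) ℝ) (hrank : Φ.rank = t)
    (d : Fin N → ℝ) (hd : ∀ i, 0 < d i)
    (D : Matrix (Fin N) (Fin N) ℝ) (hD : D = Matrix.diagonal d)
    (V : Matrix (Fin p) (Fin p) ℝ) (hV : V.PosDef)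
    (K : Matrix (Fin t) (Fin t) ℝ) (hK : K.PosDef)
    (Ω : Matrix (Fin N) (Fin N) ℝ) (hΩ : Ω = D + Φᵀ * K * Φ)
    (L : Matrix (Fin p) (Fin t) ℝ → ℝ)
    (hL : L = fun M => ((p : ℝ) / 2) * Real.log Ω.det
        + (1 / 2) * (Ω⁻¹ * (Y - M * Φ)ᵀ * V⁻¹ * (Y - M * Φ)).trace)
    (Mhat : Matrix (Fin p) (Fin t) ℝ)
    (hMhat : Mhat = Y * D⁻¹ * Φᵀ * (Φ * D⁻¹ * Φᵀ)⁻¹) :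
    ∀ M : Matrix (Fin p) (Fin t) ℝ, L Mhat ≤ L M ∧ (L M = L Mhat → M = Mhat) := by
  have hΦ : Φ.rank = Fintype.card (Fin t) := by rw [hrank, Fintype.card_fin]
  have hDpd : D.PosDef := hD ▸ PosDef.diagonal hd
  have hGpd : (Φ * D⁻¹ * Φᵀ).PosDef := by
    simpa [conjTranspose_eq_transpose_of_trivial] using
      hDpd.inv.mul_mul_conjTranspose_same (vecMul_injective_of_rank_eq_card hΦ)
  have hΩpd : Ω.PosDef := by
    simpa [hΩ, conjTranspose_eq_transpose_of_trivial] using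
      hDpd.add_posSemidef (hK.posSemidef.conjTranspose_mul_mul_same Φ)
  have hresidual : (Y - Mhat * Φ) * Ω⁻¹ * Φᵀ = 0 := by
    rw [hΩ, hMhat]
    exact mul_inv_add_mul_mul_mul_eq_zero hDpd.isUnit hK.isUnit (hK.inv.add hGpd).isUnit
      (sub_mul_inv_mul_mul_transpose_eq_zero Y Φ hGpd.isUnit)
  have hsplit : ∀ M, L M = L Mhat + weightedSqNorm Ω⁻¹ V⁻¹ ((M - Mhat) * Φ) / 2 := by
    intro M
    have hres : Y - M * Φ = (Y - Mhat * Φ) - (M - Mhat) * Φ := by rw [Matrix.sub_mul]; abel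
    subst hL
    change _ + 1 / 2 * weightedSqNorm Ω⁻¹ V⁻¹ (Y - M * Φ)
      = _ + 1 / 2 * weightedSqNorm Ω⁻¹ V⁻¹ (Y - Mhat * Φ) + _
    rw [hres, weightedSqNorm_sub_mul (isHermitian_iff_isSymm.mp hΩpd.inv.isHermitian) _ hresidual]
    ring
  intro M
  rw [hsplit M]
  refine ⟨le_add_of_nonneg_right (div_nonneg (weightedSqNorm_nonneg hΩpd.inv.posSemidef
    hV.inv.posSemidef _) zero_le_two), fun hM => ?_⟩
  have hzero : weightedSqNorm Ω⁻¹ V⁻¹ ((M - Mhat) * Φ) = 0 := by linarith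
  rw [weightedSqNorm_eq_zero_iff hΩpd.inv hV.inv] at hzero
  exact sub_eq_zero.mp (eq_zero_of_mul_eq_zero_of_rank_eq_card hΦ hzero)

theorem evidential_loss_unique_min {p t N : ℕ} (htN : t ≤ N)
    (Y : Matrix (Fin p) (Fin N) ℝ)
    (Φ : Matrix (Fin t) (Fin N) ℝ) (hrank : Φ.rank = t)
    (d : Fin N → ℝ) (hd : ∀ i, 0 < d i)
    (D : Matrix (Fin N) (Fin N) ℝ) (hD : D = Matrix.diagonal d)
    (V : Matrix (Fin p) (Fin p) ℝ) (hV : V.PosDef)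
    (K : Matrix (Fin t) (Fin t) ℝ) (hK : K.PosDef)
    (Ω : Matrix (Fin N) (Fin N) ℝ) (hΩ : Ω = D + Φᵀ * K * Φ)
    (L : Matrix (Fin p) (Fin t) ℝ → ℝ)
    (hL : L = fun M => ((p : ℝ) / 2) * Real.log Ω.det
        + (1 / 2) * (Ω⁻¹ * (Y - M * Φ)ᵀ * V⁻¹ * (Y - M * Φ)).trace)
    (Mhat : Matrix (Fin p) (Fin t) ℝ)
    (hMhat : Mhat = Y * D⁻¹ * Φᵀ * (Φ * D⁻¹ * Φᵀ)⁻¹) :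
    ∀ M : Matrix (Fin p) (Fin t) ℝ, L Mhat ≤ L M ∧ (L M = L Mhat → M = Mhat) :=
  evidential_loss_unique_min_general Y Φ hrank d hd D hD V hV K hK Ω hΩ L hL Mhat hMhat
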